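/- Let e ∈ 𝓡, let y₀ be a zero and z₀ a pole of e with z₀ − y₀ ∈ ℕ, and assume the minimality property (H1): for every zero y and every pole z of e, z − y ∈ ℕ implies z − y ≥ z₀ − y₀. Then every standard factorization (X, P, W) of e satisfies (y₀, z₀) ∈ P. -/

import Mathlib

/-!
The conditions of a standard factorization `(X, P, W)` forbid any cancellation in the displayed
product (each of them applied to a difference `0` is a disjointness statement), so the zeros of
`e` are `X ∪ P.fst` and its poles `P.snd ∪ W`. By (H1) every pair `(y, z) ∈ P` then has
`z - y ≥ z₀ - y₀`. Whatever factors `y₀` and `z₀` come from, one of (ii), (iii), (v) says that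
`z₀ - y₀` is not below the gap of a pair sharing an endpoint with `(y₀, z₀)`; so that gap equals
`z₀ - y₀`, and the pair is `(y₀, z₀)`; the remaining case `y₀ ∈ X`, `z₀ ∈ W` is excluded by (iv).
-/

open Polynomial

/-- The set `Δ_b^a ⊆ ℂ`: equal to `{k ∈ ℕ : k < b − a}` if `b − a ∈ ℕ`,
and to `ℕ` (viewed inside `ℂ`) otherwise. -/
def DeltaSet (a b : ℂ) : Set ℂ :=
  {x | ∃ k : ℕ, x = (k : ℂ) ∧ ∀ n : ℕ, (n : ℂ) = b - a → k < n}

/-- `b − a ∈ ℕ`. -/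
def natDiff (a b : ℂ) : Prop := ∃ n : ℕ, (n : ℂ) = b - a

/-- The linear rational function `u − a`. -/
noncomputable def lin (a : ℂ) : RatFunc ℂ :=
  algebraMap (Polynomial ℂ) (RatFunc ℂ) (X - C a)

/-- The rational function `∏_{x∈X}(u−x) · ∏_{(y,z)∈P}(u−y)/(u−z) · ∏_{w∈W}(u−w)⁻¹`. -/
noncomputable def stdProd (X : Multiset ℂ) (P : Multiset (ℂ × ℂ)) (W : Multiset ℂ) :
    RatFunc ℂ :=
  (X.map lin).prod * (P.map fun p => lin p.1 / lin p.2).prod *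
    (W.map fun w => (lin w)⁻¹).prod

/-- `(X, P, W)` is a standard factorization of `e ∈ 𝓡`. -/
def IsStdFact (e : RatFunc ℂ) (X : Multiset ℂ) (P : Multiset (ℂ × ℂ)) (W : Multiset ℂ) :
    Prop :=
  e = stdProd X P W ∧
  (∀ p ∈ P, ∃ n : ℕ, 0 < n ∧ (n : ℂ) = p.2 - p.1) ∧
  (∀ p ∈ P, ∀ q ∈ P,
    ¬(p.2 - q.1 ∈ DeltaSet p.1 p.2 ∧ p.2 - q.1 ∈ DeltaSet q.1 q.2)) ∧
  (∀ x ∈ X, ∀ p ∈ P, p.2 - x ∉ DeltaSet p.1 p.2) ∧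
  (∀ x ∈ X, ∀ w ∈ W, ¬ natDiff x w) ∧
  (∀ w ∈ W, ∀ p ∈ P, w - p.1 ∉ DeltaSet p.1 p.2)

theorem RatFunc.num_denom_div_of_isCoprime {K : Type*} [Field K] {p q : K[X]} (hq : q.Monic)
    (hpq : IsCoprime p q) :
    RatFunc.num (algebraMap _ _ p / algebraMap _ (RatFunc K) q) = p ∧
      RatFunc.denom (algebraMap _ _ p / algebraMap _ (RatFunc K) q) = q := by
  classical
  have hgcd : gcd p q = 1 :=
    (normalize_gcd p q).symm.trans (normalize_eq_one.mpr ((gcd_isUnit_iff p q).mpr hpq))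
  simp [hgcd, hq.leadingCoeff, hq.ne_zero]

noncomputable def linProd (S : Multiset ℂ) : ℂ[X] :=
  (S.map fun a => X - C a).prod

theorem linProd_monic (S : Multiset ℂ) : (linProd S).Monic :=
  monic_multisetProd_X_sub_C S

theorem linProd_isRoot_iff {S : Multiset ℂ} {a : ℂ} : (linProd S).IsRoot a ↔ a ∈ S := by
  rw [← mem_roots (linProd_monic S).ne_zero, linProd, roots_multiset_prod_X_sub_C]

theorem isCoprime_linProd_of_disjoint {S T : Multiset ℂ} (h : Disjoint S T) :
    IsCoprime (linProd S) (linProd T) := by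
  rw [isCoprime_iff_aeval_ne_zero_of_isAlgClosed (k := ℂ) ℂ]
  intro a
  simp only [aeval_def, Algebra.algebraMap_self, eval₂_id, ne_eq, ← IsRoot.def,
    linProd_isRoot_iff, ← not_and_or]
  exact fun ⟨hS, hT⟩ => Multiset.disjoint_left.mp h hS hT

theorem stdProd_eq_div (X : Multiset ℂ) (P : Multiset (ℂ × ℂ)) (W : Multiset ℂ) :
    stdProd X P W = algebraMap _ _ (linProd (X + P.map Prod.fst)) /
      algebraMap _ (RatFunc ℂ) (linProd (P.map Prod.snd + W)) := by
  simp only [stdProd, linProd, map_mul, map_multiset_prod, Multiset.map_add, Multiset.map_map,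
    Multiset.prod_add, Function.comp_def, Multiset.prod_map_div, Multiset.prod_map_inv, ← lin.eq_1]
  ring

theorem natCast_mem_deltaSet_iff {y z : ℂ} {n : ℕ} (hn : (n : ℂ) = z - y) (m : ℕ) :
    (m : ℂ) ∈ DeltaSet y z ↔ m < n := by
  constructor
  · rintro ⟨k, hk, hlt⟩
    exact Nat.cast_injective hk ▸ hlt n hn
  · intro h
    refine ⟨m, rfl, fun n' hn' => ?_⟩
    rwa [Nat.cast_injective (hn'.trans hn.symm)]

namespace IsStdFact

variable {e : RatFunc ℂ} {X : Multiset ℂ} {P : Multiset (ℂ × ℂ)} {W : Multiset ℂ}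

theorem zero_mem_deltaSet (hF : IsStdFact e X P W) {p : ℂ × ℂ} (hp : p ∈ P) :
    (0 : ℂ) ∈ DeltaSet p.1 p.2 := by
  obtain ⟨n, hn0, hn⟩ := hF.2.1 p hp
  exact_mod_cast (natCast_mem_deltaSet_iff hn 0).mpr hn0

theorem disjoint (hF : IsStdFact e X P W) :
    Disjoint (X + P.map Prod.fst) (P.map Prod.snd + W) := by
  have h0 := @hF.zero_mem_deltaSet
  obtain ⟨-, -, hPP, hXP, hXW, hWP⟩ := hF
  refine Multiset.disjoint_left.mpr fun {a} ha hb => ?_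
  simp only [Multiset.mem_add, Multiset.mem_map] at ha hb
  rcases ha with hx | ⟨q, hq, rfl⟩ <;> rcases hb with ⟨p, hp, hpa⟩ | hw
  · exact hXP _ hx p hp (by rw [sub_eq_zero.mpr hpa]; exact h0 hp)
  · exact hXW _ hx _ hw ⟨0, by simp⟩
  · exact hPP p hp q hq (by rw [sub_eq_zero.mpr hpa]; exact ⟨h0 hp, h0 hq⟩)
  · exact hWP _ hw q hq (by rw [sub_self]; exact h0 hq)

theorem num_denom_eq (hF : IsStdFact e X P W) :
    e.num = linProd (X + P.map Prod.fst) ∧ e.denom = linProd (P.map Prod.snd + W) := by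
  rw [hF.1, stdProd_eq_div]
  exact RatFunc.num_denom_div_of_isCoprime (linProd_monic _)
    (isCoprime_linProd_of_disjoint hF.disjoint)

theorem num_isRoot_iff (hF : IsStdFact e X P W) {a : ℂ} :
    e.num.IsRoot a ↔ a ∈ X ∨ ∃ p ∈ P, p.1 = a := by
  rw [hF.num_denom_eq.1, linProd_isRoot_iff, Multiset.mem_add, Multiset.mem_map]

theorem denom_isRoot_iff (hF : IsStdFact e X P W) {a : ℂ} :
    e.denom.IsRoot a ↔ (∃ p ∈ P, p.2 = a) ∨ a ∈ W := by
  rw [hF.num_denom_eq.2, linProd_isRoot_iff, Multiset.mem_add, Multiset.mem_map]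

end IsStdFact

theorem eq_of_sub_notMem_deltaSet {p : ℂ × ℂ} {y₀ z₀ : ℂ} {n₀ : ℕ}
    (hp : ∃ n : ℕ, (n : ℂ) = p.2 - p.1 ∧ n₀ ≤ n) (h₀ : (n₀ : ℂ) = z₀ - y₀)
    (hnot : z₀ - y₀ ∉ DeltaSet p.1 p.2) (hshared : p.1 = y₀ ∨ p.2 = z₀) : p = (y₀, z₀) := by
  obtain ⟨n, hn, hle⟩ := hp
  rw [← h₀, natCast_mem_deltaSet_iff hn] at hnot
  obtain rfl : n = n₀ := by omega
  rcases hshared with h | h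
  · exact Prod.ext h (by linear_combination h₀ - hn + h)
  · exact Prod.ext (by linear_combination hn - h₀ + h) h

theorem stdFact_mem_general (e : RatFunc ℂ)
    (y₀ z₀ : ℂ) (hy₀ : e.num.IsRoot y₀) (hz₀ : e.denom.IsRoot z₀)
    (n₀ : ℕ) (hn₀ : (n₀ : ℂ) = z₀ - y₀)
    (H1 : ∀ y z : ℂ, e.num.IsRoot y → e.denom.IsRoot z →
      ∀ m : ℕ, (m : ℂ) = z - y → n₀ ≤ m) :
    ∀ (X : Multiset ℂ) (P : Multiset (ℂ × ℂ)) (W : Multiset ℂ),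
      IsStdFact e X P W → (y₀, z₀) ∈ P := by
  intro X P W hF
  have hgap (p : ℂ × ℂ) (hp : p ∈ P) : ∃ n : ℕ, (n : ℂ) = p.2 - p.1 ∧ n₀ ≤ n := by
    obtain ⟨n, -, hn⟩ := hF.2.1 p hp
    exact ⟨n, hn, H1 _ _ (hF.num_isRoot_iff.2 (.inr ⟨p, hp, rfl⟩))
      (hF.denom_isRoot_iff.2 (.inl ⟨p, hp, rfl⟩)) n hn⟩
  rcases hF.num_isRoot_iff.1 hy₀ with hyX | ⟨q, hq, rfl⟩ <;>
    rcases hF.denom_isRoot_iff.1 hz₀ with ⟨p, hp, rfl⟩ | hzW <;>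
    obtain ⟨-, -, hPP, hXP, hXW, hWP⟩ := hF
  · exact eq_of_sub_notMem_deltaSet (hgap p hp) hn₀ (hXP _ hyX p hp) (.inr rfl) ▸ hp
  · exact absurd ⟨n₀, hn₀⟩ (hXW _ hyX _ hzW)
  · rcases not_and_or.1 (hPP p hp q hq) with hnot | hnot
    · exact eq_of_sub_notMem_deltaSet (hgap p hp) hn₀ hnot (.inr rfl) ▸ hp
    · exact eq_of_sub_notMem_deltaSet (hgap q hq) hn₀ hnot (.inl rfl) ▸ hq
  · exact eq_of_sub_notMem_deltaSet (hgap q hq) hn₀ (hWP _ hzW q hq) (.inl rfl) ▸ hq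

/-- Let `y₀` be a zero and `z₀` a pole of `e ∈ 𝓡` with `z₀ − y₀ ∈ ℕ`, minimal among all
differences `z − y ∈ ℕ` of a pole `z` and a zero `y` of `e` (hypothesis (H1)). Then every
standard factorization `(X, P, W)` of `e` satisfies `(y₀, z₀) ∈ P`. -/
theorem stdFact_mem (e : RatFunc ℂ) (he : e ≠ 0)
    (hnum : e.num.Monic) (hden : e.denom.Monic)
    (y₀ z₀ : ℂ) (hy₀ : e.num.IsRoot y₀) (hz₀ : e.denom.IsRoot z₀)
    (n₀ : ℕ) (hn₀ : (n₀ : ℂ) = z₀ - y₀)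
    (H1 : ∀ y z : ℂ, e.num.IsRoot y → e.denom.IsRoot z →
      ∀ m : ℕ, (m : ℂ) = z - y → n₀ ≤ m) :
    ∀ (X : Multiset ℂ) (P : Multiset (ℂ × ℂ)) (W : Multiset ℂ),
      IsStdFact e X P W → (y₀, z₀) ∈ P :=
  stdFact_mem_general e y₀ z₀ hy₀ hz₀ n₀ hn₀ H1
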